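/- Let α ∉ {0,1}, ε ≥ 0, and f₀ : (0,1) → ℝ. Suppose |F₀(p,q)| ≤ M for all p, q ∈ (0,1), where F₀(p,q) = f₀(p) + p^α f₀(q) - f₀(pq) - (1-pq)^α f₀((1-p)/(1-pq)), and |f₀(x) - f₀(1-x)| ≤ N for all x ∈ (0,1). Then for all p, q ∈ (0,1), |f₀(p)(q^α + (1-q)^α - 1) - f₀(q)(p^α + (1-p)^α - 1)| ≤ 2M + (1-pq)^α (M + N). -/

import Mathlib

/-!
Write `D = 1 - pq`, `t = (1 - p)/D` and `s = (1 - q)/D`, all in `(0,1)`. Since `sp = 1 - t` and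
`(1 - s)/t = q`, the defect `F(s,p)` involves `f(1 - t)` and `f(q)`, and `D^α s^α = (1-q)^α`,
`D^α t^α = (1-p)^α`. Hence the antisymmetrised expression is the exact combination
`F(q,p) - F(p,q) - D^α (f(t) - f(1-t) - F(s,p))`, and the triangle inequality gives the bound.
-/

open Set

noncomputable section

/-- The defect `F₀(p,q)` of the functional equation. -/
def cocycleDefect (α : ℝ) (f : ℝ → ℝ) (p q : ℝ) : ℝ :=
  f p + p ^ α * f q - f (p * q) - (1 - p * q) ^ α * f ((1 - p) / (1 - p * q))

lemma one_sub_div_one_sub_mul_mem_Ioo {p q : ℝ} (hp : p ∈ Ioo (0 : ℝ) 1) (hq : q ∈ Ioo (0 : ℝ) 1) :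
    (1 - p) / (1 - p * q) ∈ Ioo (0 : ℝ) 1 := by
  obtain ⟨hp0, hp1⟩ := hp
  obtain ⟨hq0, hq1⟩ := hq
  have hD : 0 < 1 - p * q := by nlinarith
  exact ⟨div_pos (by linarith) hD, (div_lt_one hD).2 (by nlinarith)⟩

lemma div_one_sub_mul_mul_eq {p q : ℝ} (hpq : p * q ≠ 1) :
    (1 - q) / (1 - p * q) * p = 1 - (1 - p) / (1 - p * q) := by
  have hD : 1 - p * q ≠ 0 := sub_ne_zero.2 (Ne.symm hpq)
  rw [div_mul_eq_mul_div, eq_sub_iff_add_eq, ← add_div, div_eq_iff hD]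
  ring

lemma one_sub_div_one_sub_mul_div_eq {p q : ℝ} (hpq : p * q ≠ 1) (hp : p ≠ 1) :
    (1 - (1 - q) / (1 - p * q)) / ((1 - p) / (1 - p * q)) = q := by
  have hD : 1 - p * q ≠ 0 := sub_ne_zero.2 (Ne.symm hpq)
  have h1p : 1 - p ≠ 0 := sub_ne_zero.2 (Ne.symm hp)
  rw [div_eq_iff (div_ne_zero h1p hD), one_sub_div hD, mul_div_assoc', div_left_inj' hD]
  ring

lemma rpow_mul_rpow_div_cancel {a b : ℝ} (α : ℝ) (ha : 0 ≤ a) (hb : 0 < b) :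
    b ^ α * (a / b) ^ α = a ^ α := by
  rw [← Real.mul_rpow hb.le (div_nonneg ha hb.le), mul_div_cancel₀ a hb.ne']

lemma antisymm_eq_cocycleDefect (α : ℝ) (f : ℝ → ℝ) {p q : ℝ}
    (hp : p ∈ Ioo (0 : ℝ) 1) (hq : q ∈ Ioo (0 : ℝ) 1) :
    f p * (q ^ α + (1 - q) ^ α - 1) - f q * (p ^ α + (1 - p) ^ α - 1) =
      cocycleDefect α f q p - cocycleDefect α f p q -
        (1 - p * q) ^ α * (f ((1 - p) / (1 - p * q)) - f (1 - (1 - p) / (1 - p * q)) -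
          cocycleDefect α f ((1 - q) / (1 - p * q)) p) := by
  have hD : 0 < 1 - p * q := by nlinarith [hp.1, hp.2, hq.1, hq.2]
  have hpq : p * q ≠ 1 := by linarith
  have hDs := rpow_mul_rpow_div_cancel α (sub_nonneg.2 hq.2.le) hD
  have hDt := rpow_mul_rpow_div_cancel α (sub_nonneg.2 hp.2.le) hD
  have hsp := div_one_sub_mul_mul_eq hpq
  have hsq := one_sub_div_one_sub_mul_div_eq hpq hp.2.ne
  simp only [cocycleDefect, hsp, sub_sub_cancel, hsq, mul_comm q p]
  rw [← hDs, ← hDt]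
  ring

end

theorem stmt_6_general (α M N : ℝ) (f₀ : ℝ → ℝ)
    (hF₀ : ∀ p q : ℝ, p ∈ Set.Ioo (0 : ℝ) 1 → q ∈ Set.Ioo (0 : ℝ) 1 →
      |f₀ p + p ^ α * f₀ q - f₀ (p * q) -
        (1 - p * q) ^ α * f₀ ((1 - p) / (1 - p * q))| ≤ M)
    (hsym : ∀ x : ℝ, x ∈ Set.Ioo (0 : ℝ) 1 → |f₀ x - f₀ (1 - x)| ≤ N) :
    ∀ p q : ℝ, p ∈ Set.Ioo (0 : ℝ) 1 → q ∈ Set.Ioo (0 : ℝ) 1 →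
      |f₀ p * (q ^ α + (1 - q) ^ α - 1) - f₀ q * (p ^ α + (1 - p) ^ α - 1)| ≤
        2 * M + (1 - p * q) ^ α * (M + N) := by
  intro p q hp hq
  have hD : 0 ≤ (1 - p * q) ^ α := Real.rpow_nonneg (by nlinarith [hp.1, hp.2, hq.1, hq.2]) α
  have hFpq := hF₀ p q hp hq
  have hFqp := hF₀ q p hq hp
  have hFsp := hF₀ _ p (one_sub_div_one_sub_mul_mem_Ioo hq hp) hp
  have hsymt := hsym _ (one_sub_div_one_sub_mul_mem_Ioo hp hq)
  rw [mul_comm q p] at hFqp hFsp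
  rw [antisymm_eq_cocycleDefect α f₀ hp hq]
  simp only [cocycleDefect, mul_comm q p]
  calc _ ≤ M + M + (1 - p * q) ^ α * (N + M) := by
        refine (abs_sub _ _).trans (add_le_add ((abs_sub _ _).trans (add_le_add hFqp hFpq)) ?_)
        rw [abs_mul, abs_of_nonneg hD]
        exact mul_le_mul_of_nonneg_left ((abs_sub _ _).trans (add_le_add hsymt hFsp)) hD
    _ = 2 * M + (1 - p * q) ^ α * (M + N) := by ring

theorem stmt_6 (α ε M N : ℝ) (hα : α ≠ 0) (hα1 : α ≠ 1) (hε : 0 ≤ ε)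
    (hM : 0 ≤ M) (hN : 0 ≤ N) (f₀ : ℝ → ℝ)
    (hF₀ : ∀ p q : ℝ, p ∈ Set.Ioo (0 : ℝ) 1 → q ∈ Set.Ioo (0 : ℝ) 1 →
      |f₀ p + p ^ α * f₀ q - f₀ (p * q) -
        (1 - p * q) ^ α * f₀ ((1 - p) / (1 - p * q))| ≤ M)
    (hsym : ∀ x : ℝ, x ∈ Set.Ioo (0 : ℝ) 1 → |f₀ x - f₀ (1 - x)| ≤ N) :
    ∀ p q : ℝ, p ∈ Set.Ioo (0 : ℝ) 1 → q ∈ Set.Ioo (0 : ℝ) 1 →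
      |f₀ p * (q ^ α + (1 - q) ^ α - 1) - f₀ q * (p ^ α + (1 - p) ^ α - 1)| ≤
        2 * M + (1 - p * q) ^ α * (M + N) :=
  stmt_6_general α M N f₀ hF₀ hsym
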